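/- Let L, L' ≥ 2 be integers with input alphabet 𝒳 = {1,…,L} and output alphabet 𝒴 = {1,…,L'}, and let W(y|x) > 0 for all x ∈ 𝒳, y ∈ 𝒴 with Σ_{y∈𝒴} W(y|x) = 1 for every x. Then the normalized mutual information Ĩ(f) = I(f)/E(f) is a quasiconcave function of f on the standard probability simplex over 𝒳. -/

import Mathlib

/-- The mutual information `I(f) = Σ_y Σ_x f(x)·W(y|x)·log₂(W(y|x)/Σ_j f(j)·W(y|j))`
of an input distribution `f` on `𝒳 = {1,…,L}` (indexed by `Fin L`, symbol `x` having
runlength value `x+1`) through a channel with transition probabilities `W`. -/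
noncomputable def mutualInfo (L L' : ℕ) (W : Fin L → Fin L' → ℝ) (f : Fin L → ℝ) : ℝ :=
  ∑ y, ∑ x, f x * W x y * Real.logb 2 (W x y / ∑ j, f j * W j y)

/-- The mean runlength `E(f) = Σ_{j∈{1,…,L}} j·f(j)` (symbol `j : Fin L` has value `j+1`). -/
noncomputable def meanRL (L : ℕ) (f : Fin L → ℝ) : ℝ :=
  ∑ j : Fin L, (((j : ℕ) : ℝ) + 1) * f j


/-! The mutual information splits as `I(f) = -H(Y|X) + H(Y)`: the first term is linear in `f`
and the second is the entropy of the output distribution `f ᵥ* W`, a concave function of a linear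
map of `f`, so `I` is concave on the simplex. Since `E` is linear and positive there, the
superlevel set `{I / E ≥ c}` is the superlevel set `{I - c E ≥ 0}` of a concave function,
hence convex. -/

open Real Matrix

section Convexity

theorem ConcaveOn.fun_sum {𝕜 E ι β : Type*} [Semiring 𝕜] [PartialOrder 𝕜] [AddCommMonoid E]
    [AddCommMonoid β] [PartialOrder β] [IsOrderedAddMonoid β] [SMul 𝕜 E] [Module 𝕜 β]
    {s : Set E} {t : Finset ι} {f : ι → E → β}
    (hs : Convex 𝕜 s) (h : ∀ i ∈ t, ConcaveOn 𝕜 s (f i)) :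
    ConcaveOn 𝕜 s fun x => ∑ i ∈ t, f i x := by
  classical
  induction t using Finset.induction_on with
  | empty => simpa using concaveOn_const (0 : β) hs
  | insert i t hi ih =>
    simp only [Finset.sum_insert hi]
    exact (h i (t.mem_insert_self i)).add (ih fun j hj => h j (Finset.mem_insert_of_mem hj))

variable {𝕜 E : Type*} [Field 𝕜] [LinearOrder 𝕜] [IsStrictOrderedRing 𝕜]
  [AddCommGroup E] [Module 𝕜 E] {s : Set E}

theorem ConcaveOn.quasiconcaveOn_div {f g : E → 𝕜} (hf : ConcaveOn 𝕜 s f)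
    (hg_convex : ConvexOn 𝕜 s g) (hg_concave : ConcaveOn 𝕜 s g) (hg_pos : ∀ x ∈ s, 0 < g x) :
    QuasiconcaveOn 𝕜 s fun x => f x / g x := by
  intro c
  have hsub : ConcaveOn 𝕜 s (f - c • g) := by
    rcases le_or_gt 0 c with hc | hc
    · exact hf.sub (hg_convex.smul hc)
    · rw [show f - c • g = f + fun x => -c • g x by ext x; simp [sub_eq_add_neg]]
      exact hf.add (hg_concave.smul (neg_nonneg.2 hc.le))
  convert hsub.convex_ge 0 using 1
  ext x
  simp only [Set.mem_ofPred_eq, Pi.sub_apply, Pi.smul_apply, smul_eq_mul, sub_nonneg]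
  exact and_congr_right fun hx => le_div_iff₀ (hg_pos x hx)

end Convexity

theorem dotProduct_pos_of_mem_stdSimplex {ι : Type*} [Fintype ι] {f w : ι → ℝ}
    (hf : f ∈ stdSimplex ℝ ι) (hw : ∀ i, 0 < w i) : 0 < f ⬝ᵥ w := by
  obtain ⟨i, -, hi⟩ : ∃ i ∈ Finset.univ, 0 < f i :=
    Finset.exists_lt_of_sum_lt (f := fun _ => 0) (by simp [hf.2])
  exact Finset.sum_pos' (fun j _ => mul_nonneg (hf.1 j) (hw j).le)
    ⟨i, Finset.mem_univ i, mul_pos hi (hw i)⟩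

theorem sum_mul_logb_div_dotProduct {ι : Type*} [Fintype ι] (b : ℝ) {f w : ι → ℝ}
    (hw : ∀ i, w i ≠ 0) (hfw : f ⬝ᵥ w ≠ 0) :
    ∑ i, f i * w i * logb b (w i / (f ⬝ᵥ w))
      = (fun i => w i * logb b (w i)) ⬝ᵥ f + (log b)⁻¹ * negMulLog (f ⬝ᵥ w) := by
  have hsplit : ∀ i, f i * w i * logb b (w i / (f ⬝ᵥ w))
      = w i * logb b (w i) * f i - f i * w i * logb b (f ⬝ᵥ w) := fun i => by
    rw [logb_div (hw i) hfw]
    ring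
  simp only [hsplit, Finset.sum_sub_distrib, ← Finset.sum_mul]
  simp only [dotProduct, negMulLog, logb]
  ring

section MutualInformation

variable {L L' : ℕ} {W : Fin L → Fin L' → ℝ}

theorem mutualInfo_eq_sum_dotProduct_add_negMulLog (hW : ∀ x y, 0 < W x y) {f : Fin L → ℝ}
    (hf : f ∈ stdSimplex ℝ (Fin L)) :
    mutualInfo L L' W f
      = ∑ y, ((fun x => W x y * logb 2 (W x y)) ⬝ᵥ f + (log 2)⁻¹ * negMulLog ((f ᵥ* W) y)) :=
  Finset.sum_congr rfl fun y _ => sum_mul_logb_div_dotProduct 2 (fun x => (hW x y).ne')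
    (dotProduct_pos_of_mem_stdSimplex hf (hW · y)).ne'

theorem concaveOn_mutualInfo (hW : ∀ x y, 0 < W x y) :
    ConcaveOn ℝ (stdSimplex ℝ (Fin L)) (mutualInfo L L' W) := by
  have hconv := convex_stdSimplex ℝ (Fin L)
  refine (ConcaveOn.fun_sum hconv fun y _ => ?_).congr
    fun f hf => (mutualInfo_eq_sum_dotProduct_add_negMulLog hW hf).symm
  have hq : ConcaveOn ℝ (stdSimplex ℝ (Fin L)) fun f => negMulLog ((f ᵥ* W) y) :=
    (concaveOn_negMulLog.comp_linearMap ((LinearMap.proj y).comp (vecMulLinear W))).subset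
      (fun f hf => (dotProduct_pos_of_mem_stdSimplex hf (hW · y)).le) hconv
  exact ((dotProductBilin ℝ ℝ _).concaveOn hconv).add
    (hq.smul (inv_nonneg.2 (log_nonneg one_le_two)))

end MutualInformation

theorem one_le_meanRL {L : ℕ} {f : Fin L → ℝ} (hf : f ∈ stdSimplex ℝ (Fin L)) : 1 ≤ meanRL L f :=
  calc 1 = ∑ j, f j := hf.2.symm
    _ ≤ meanRL L f := Finset.sum_le_sum fun j _ =>
      le_mul_of_one_le_left (hf.1 j) (by simp)

theorem stmt5_general (L L' : ℕ)
    (W : Fin L → Fin L' → ℝ) (hWpos : ∀ x y, 0 < W x y) :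
    QuasiconcaveOn ℝ (stdSimplex ℝ (Fin L)) (fun f => mutualInfo L L' W f / meanRL L f) := by
  have hconv := convex_stdSimplex ℝ (Fin L)
  have hE : meanRL L = dotProductBilin ℝ ℝ (fun j : Fin L => ((j : ℕ) : ℝ) + 1) := rfl
  exact (concaveOn_mutualInfo hWpos).quasiconcaveOn_div (hE ▸ LinearMap.convexOn _ hconv)
    (hE ▸ LinearMap.concaveOn _ hconv) fun f hf => one_pos.trans_le (one_le_meanRL hf)

/-- The normalized mutual information `Ĩ(f) = I(f)/E(f)` is quasiconcave on the
standard probability simplex over `𝒳 = {1,…,L}`. -/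
theorem stmt5 (L L' : ℕ) (hL : 2 ≤ L) (hL' : 2 ≤ L')
    (W : Fin L → Fin L' → ℝ) (hWpos : ∀ x y, 0 < W x y) (hWsum : ∀ x, ∑ y, W x y = 1) :
    QuasiconcaveOn ℝ (stdSimplex ℝ (Fin L)) (fun f => mutualInfo L L' W f / meanRL L f) :=
  stmt5_general L L' W hWpos
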